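/- Assume the u_j are pairwise distinct and that sup_{x ∈ [0,1]} | x − (1/n) Σ_{j=1}^n 1(u_j ≤ x) | → 0 as n → ∞. Then: (i) ≺ is a strict total order on [0,1], i.e. any two distinct points of [0,1] are comparable; (ii) φ_k → φ uniformly on [0,1] as k → ∞; (iii) φ is continuous at every point of [0,1] \ { u_j : j ≥ 1 }; (iv) φ preserves Lebesgue measure, i.e. φ_# Leb = Leb, and hence the pushforward μ_φ of Leb under x ↦ (x, φ(x)) is a permuton (a probability measure on [0,1]² both of whose coordinate marginals equal Leb). -/

import Mathlib

open MeasureTheory Filter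

/-- `I(x,y) = (min(x,y), max(x,y)]`. -/
def gapInterval (x y : ℝ) : Set ℝ := Set.Ioc (min x y) (max x y)

/-- `i(x,y) = inf { j ≥ 1 : u_j ∈ I(x,y) } ∈ ℕ ∪ {∞}` (with `inf ∅ = ∞`). -/
noncomputable def firstIdx (u : ℕ → ℝ) (x y : ℝ) : ℕ∞ :=
  sInf ((fun j : ℕ => (j : ℕ∞)) '' {j : ℕ | 1 ≤ j ∧ u j ∈ gapInterval x y})

/-- `x ≺ y` iff `i(x,y) < ∞` and `(y − x) · s_{i(x,y)} > 0`. -/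
def Prec (u s : ℕ → ℝ) (x y : ℝ) : Prop :=
  ∃ j : ℕ, firstIdx u x y = (j : ℕ∞) ∧ (y - x) * s j > 0

/-- `φ_k(x) = Leb({ y ∈ [0,1] : y ≺ x and i(x,y) ≤ k })`. -/
noncomputable def phiK (u s : ℕ → ℝ) (k : ℕ) (x : ℝ) : ℝ :=
  (volume {y : ℝ | y ∈ Set.Icc (0:ℝ) 1 ∧ Prec u s y x ∧ firstIdx u x y ≤ (k : ℕ∞)}).toReal

/-- `φ(x) = Leb({ y ∈ [0,1] : y ≺ x })`. -/
noncomputable def phi (u s : ℕ → ℝ) (x : ℝ) : ℝ :=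
  (volume {y : ℝ | y ∈ Set.Icc (0:ℝ) 1 ∧ Prec u s y x}).toReal

/-!
The first separating index `i(x, y)` behaves like an ultrametric (a large index means close), and
along a chain `x ≺ y ≺ z` the two indices differ, so `i(x, z)` is their minimum; this makes `≺`
transitive. Points not separated by `u_1, …, u_k` have the same empirical distribution function,
so the cells of the partition of `[0,1]` cut out by `u_1, …, u_k` have length at most `2 D_k`,
where `D_k → 0` is the discrepancy. This gives totality, `0 ≤ φ - φ_k ≤ 2 D_k`, and continuity of
`φ` off the `u_j`. Restricted to pairs with `i ≤ k`, `≺` is a strict weak order whose classes are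
these cells, so its rank function `φ_k` satisfies `t ≤ Leb {φ_k ≤ t} ≤ t + 2 D_k`; sandwiching `φ`
between `φ_k` and `φ_k + 2 D_k` and letting `k → ∞` gives `Leb {φ ≤ t} = t`.
-/

open scoped Topology

section General

theorem mul_pos_iff_of_lt_iff {a b c d r : ℝ} (h : a < b ↔ c < d) (hab : a ≠ b) (hcd : c ≠ d) :
    0 < (b - a) * r ↔ 0 < (d - c) * r := by
  rcases hab.lt_or_gt with hab | hab
  · rw [mul_pos_iff_of_pos_left (sub_pos.mpr hab), mul_pos_iff_of_pos_left (sub_pos.mpr (h.mp hab))]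
  · have hdc : d < c := lt_of_le_of_ne (not_lt.mp fun hcd' => hab.not_gt (h.mpr hcd')) hcd.symm
    constructor <;> intro <;> nlinarith

theorem ENat.measurable_of_measurableSet_lt {α : Type*} [MeasurableSpace α] {f : α → ℕ∞}
    (h : ∀ k : ℕ, MeasurableSet {a | (k : ℕ∞) < f a}) : Measurable f := by
  refine measurable_to_countable' fun n => ?_
  induction n using ENat.recTopCoe with
  | top => convert MeasurableSet.iInter h; ext; simp [ENat.eq_top_iff_forall_gt]
  | coe j =>
    cases j with
    | zero => convert (h 0).compl; ext; simp [pos_iff_ne_zero]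
    | succ j =>
      convert (h j).diff (h (j + 1)); ext a
      simp only [Set.mem_preimage, Set.mem_singleton_iff, Set.mem_sdiff, Set.mem_ofPred_eq, not_lt]
      push_cast
      constructor
      · rintro h; rw [h]; exact ⟨by exact_mod_cast j.lt_succ_self, le_rfl⟩
      · rintro ⟨h1, h2⟩; exact le_antisymm h2 (Order.add_one_le_of_lt h1)

theorem map_restrict_Icc_eq_of_volume_setOf_le {f : ℝ → ℝ} (hf : Measurable f)
    (hf01 : ∀ x ∈ Set.Icc (0:ℝ) 1, f x ∈ Set.Icc (0:ℝ) 1)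
    (h : ∀ t ∈ Set.Icc (0:ℝ) 1, volume {x ∈ Set.Icc (0:ℝ) 1 | f x ≤ t} = ENNReal.ofReal t) :
    Measure.map f (volume.restrict (Set.Icc (0:ℝ) 1)) = volume.restrict (Set.Icc (0:ℝ) 1) := by
  refine Measure.ext_of_Iic _ _ fun a => ?_
  rw [Measure.map_apply hf measurableSet_Iic, Measure.restrict_apply (hf measurableSet_Iic),
    Measure.restrict_apply measurableSet_Iic]
  rcases lt_or_ge a 0 with ha | ha
  · have h₁ : f ⁻¹' Set.Iic a ∩ Set.Icc 0 1 = ∅ := Set.eq_empty_of_forall_notMem fun x hx => by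
      have : f x ≤ a := hx.1
      linarith [(hf01 x hx.2).1]
    have h₂ : Set.Iic a ∩ Set.Icc (0:ℝ) 1 = ∅ := Set.eq_empty_of_forall_notMem fun x hx => by
      have : x ≤ a := hx.1
      linarith [hx.2.1]
    rw [h₁, h₂]
  rcases le_or_gt 1 a with ha1 | ha1
  · rw [Set.inter_eq_right.mpr fun x hx => show x ∈ f ⁻¹' Set.Iic a from (hf01 x hx).2.trans ha1,
      Set.inter_eq_right.mpr fun x hx => show x ∈ Set.Iic a from hx.2.trans ha1]
  · have h₂ : Set.Iic a ∩ Set.Icc (0:ℝ) 1 = Set.Icc 0 a := by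
      ext x
      exact ⟨fun hx => ⟨hx.2.1, hx.1⟩, fun hx => ⟨hx.2, hx.1, hx.2.trans ha1.le⟩⟩
    rw [Set.inter_comm, h₂, Real.volume_Icc, sub_zero, ← h a ⟨ha, ha1.le⟩]
    rfl

end General

/-! `lowerMeasure μ S r` is the rank function of a strict weak order `r` (asymmetric and negatively
transitive, as in the hypotheses `hasymm` and `hneg` below); the class of `x` is the set
`{z ∈ S | ¬ r x z ∧ ¬ r z x}` of points incomparable to it. -/

section LowerMeasure

variable {X : Type*} [MeasurableSpace X] {μ : Measure X} {S : Set X} {r : X → X → Prop}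
  {x y : X} {t δ : ℝ}

noncomputable def lowerMeasure (μ : Measure X) (S : Set X) (r : X → X → Prop) (x : X) : ℝ :=
  μ.real {y ∈ S | r y x}

theorem lowerMeasure_eq_of_incomp (hneg : ∀ x y z, r x y → r x z ∨ r z y)
    (hxy : ¬ r x y) (hyx : ¬ r y x) : lowerMeasure μ S r x = lowerMeasure μ S r y := by
  refine congrArg μ.real (Set.ext fun z => and_congr_right fun _ => ⟨fun h => ?_, fun h => ?_⟩)
  · exact (hneg z x y h).resolve_right hyx
  · exact (hneg z y x h).resolve_right hxy

theorem finite_image_lowerMeasure (hneg : ∀ x y z, r x y → r x z ∨ r z y) (F : Finset X)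
    (hF : ∀ x ∈ S, ∃ c ∈ F, ¬ r x c ∧ ¬ r c x) : (lowerMeasure μ S r '' S).Finite := by
  refine (F.finite_toSet.image (lowerMeasure μ S r)).subset ?_
  rintro _ ⟨x, hx, rfl⟩
  obtain ⟨c, hc, hxc, hcx⟩ := hF x hx
  exact ⟨c, hc, lowerMeasure_eq_of_incomp hneg hcx hxc⟩

theorem lowerMeasure_add_le (hasymm : ∀ x y, r x y → ¬ r y x)
    (hneg : ∀ x y z, r x y → r x z ∨ r z y) (hS : μ S ≠ ⊤)
    (hmeas : MeasurableSet {z ∈ S | ¬ r x z ∧ ¬ r z x}) (hxy : r x y) :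
    lowerMeasure μ S r x + μ.real {z ∈ S | ¬ r x z ∧ ¬ r z x} ≤ lowerMeasure μ S r y := by
  have hdisj : Disjoint {z ∈ S | r z x} {z ∈ S | ¬ r x z ∧ ¬ r z x} :=
    Set.disjoint_left.mpr fun z hz hz' => hz'.2.2 hz.2
  have hsub : {z ∈ S | r z x} ∪ {z ∈ S | ¬ r x z ∧ ¬ r z x} ⊆ {z ∈ S | r z y} := by
    rintro z (⟨hz, hzx⟩ | ⟨hz, hxz, -⟩)
    · exact ⟨hz, (hneg z x y hzx).resolve_right (hasymm x y hxy)⟩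
    · exact ⟨hz, (hneg x y z hxy).resolve_left hxz⟩
  rw [lowerMeasure, ← measureReal_union hdisj hmeas (measure_ne_top_of_subset (fun z hz => hz.1) hS)
    (measure_ne_top_of_subset (fun z hz => hz.1) hS)]
  exact measureReal_mono hsub (measure_ne_top_of_subset (fun z hz => hz.1) hS)

/-- Take `x` of maximal rank among the points of rank `≤ t`: these all lie in the class of `x` or
below `x`. Symmetrically, in `le_measureReal_setOf_lowerMeasure_le`, every point below an `x` of
minimal rank among those of rank `> t` has rank `≤ t`. -/
theorem measureReal_setOf_lowerMeasure_le_le (hasymm : ∀ x y, r x y → ¬ r y x)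
    (hneg : ∀ x y z, r x y → r x z ∨ r z y) (hS : μ S ≠ ⊤)
    (hmeas : ∀ x ∈ S, MeasurableSet {z ∈ S | ¬ r x z ∧ ¬ r z x})
    (hpos : ∀ x ∈ S, 0 < μ.real {z ∈ S | ¬ r x z ∧ ¬ r z x})
    (hδ : ∀ x ∈ S, μ.real {z ∈ S | ¬ r x z ∧ ¬ r z x} ≤ δ)
    (hfin : (lowerMeasure μ S r '' S).Finite) (htδ : 0 ≤ t + δ) :
    μ.real {x ∈ S | lowerMeasure μ S r x ≤ t} ≤ t + δ := by
  set D := {x ∈ S | lowerMeasure μ S r x ≤ t}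
  rcases D.eq_empty_or_nonempty with hD | hD
  · rwa [hD, measureReal_empty]
  obtain ⟨_, ⟨x, hxD, rfl⟩, hmax⟩ := Set.exists_max_image _ id
    (hfin.subset (Set.image_mono (Set.sep_subset _ _))) (hD.image (lowerMeasure μ S r))
  have hsub : D ⊆ {z ∈ S | r z x} ∪ {z ∈ S | ¬ r x z ∧ ¬ r z x} := by
    intro y hy
    by_cases hyx : r y x
    · exact Or.inl ⟨hy.1, hyx⟩
    refine Or.inr ⟨hy.1, fun hxy => ?_, hyx⟩
    have hyx' : lowerMeasure μ S r y ≤ lowerMeasure μ S r x := hmax _ ⟨y, hy, rfl⟩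
    linarith [lowerMeasure_add_le hasymm hneg hS (hmeas x hxD.1) hxy, hpos x hxD.1]
  calc μ.real D ≤ μ.real ({z ∈ S | r z x} ∪ {z ∈ S | ¬ r x z ∧ ¬ r z x}) :=
        measureReal_mono hsub (measure_ne_top_of_subset (Set.union_subset (Set.sep_subset _ _)
          (Set.sep_subset _ _)) hS)
    _ ≤ lowerMeasure μ S r x + μ.real {z ∈ S | ¬ r x z ∧ ¬ r z x} := measureReal_union_le _ _
    _ ≤ t + δ := add_le_add hxD.2 (hδ x hxD.1)

theorem le_measureReal_setOf_lowerMeasure_le (hasymm : ∀ x y, r x y → ¬ r y x)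
    (hneg : ∀ x y z, r x y → r x z ∨ r z y) (hS : μ S ≠ ⊤)
    (hmeas : ∀ x ∈ S, MeasurableSet {z ∈ S | ¬ r x z ∧ ¬ r z x})
    (hpos : ∀ x ∈ S, 0 < μ.real {z ∈ S | ¬ r x z ∧ ¬ r z x})
    (hfin : (lowerMeasure μ S r '' S).Finite) (ht : t ≤ μ.real S) :
    t ≤ μ.real {x ∈ S | lowerMeasure μ S r x ≤ t} := by
  set E := {x ∈ S | t < lowerMeasure μ S r x}
  rcases E.eq_empty_or_nonempty with hE | hE
  · convert ht using 2
    exact Set.sep_eq_self_iff_mem_true.mpr fun x hx => not_lt.mp fun h => hE.subset ⟨hx, h⟩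
  obtain ⟨_, ⟨x, hxE, rfl⟩, hmin⟩ := Set.exists_min_image _ id
    (hfin.subset (Set.image_mono (Set.sep_subset _ _))) (hE.image (lowerMeasure μ S r))
  have hsub : {z ∈ S | r z x} ⊆ {x ∈ S | lowerMeasure μ S r x ≤ t} := by
    refine fun z hz => ⟨hz.1, not_lt.mp fun hzt => ?_⟩
    have hxz : lowerMeasure μ S r x ≤ lowerMeasure μ S r z := hmin _ ⟨z, ⟨hz.1, hzt⟩, rfl⟩
    linarith [lowerMeasure_add_le hasymm hneg hS (hmeas z hz.1) hz.2, hpos z hz.1]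
  exact hxE.2.le.trans (measureReal_mono hsub (measure_ne_top_of_subset (Set.sep_subset _ _) hS))

end LowerMeasure

section GapInterval

variable {x y z t : ℝ}

theorem mem_gapInterval_iff : t ∈ gapInterval x y ↔ ¬(x < t ↔ y < t) := by
  simp only [gapInterval, Set.mem_Ioc, min_lt_iff, ← not_lt, max_lt_iff]
  tauto

theorem gapInterval_comm (x y : ℝ) : gapInterval x y = gapInterval y x := by
  rw [gapInterval, gapInterval, min_comm, max_comm]

theorem mem_gapInterval_or (h : t ∈ gapInterval x z) (y : ℝ) :
    t ∈ gapInterval x y ∨ t ∈ gapInterval y z := by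
  simp only [mem_gapInterval_iff] at h ⊢
  tauto

theorem ne_of_mem_gapInterval (h : t ∈ gapInterval x y) : x ≠ y := by
  rintro rfl
  simp [mem_gapInterval_iff] at h

theorem lt_iff_lt_of_mem_gapInterval (h : t ∈ gapInterval x y) : x < y ↔ x < t := by
  rw [mem_gapInterval_iff] at h
  constructor <;> intro h' <;> by_contra h'' <;> apply h <;> constructor <;> intro <;> linarith

theorem lt_iff_le_of_mem_gapInterval (h : t ∈ gapInterval x y) : x < y ↔ t ≤ y := by
  rw [mem_gapInterval_iff] at h
  constructor <;> intro h' <;> by_contra h'' <;> apply h <;> constructor <;> intro <;> linarith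

end GapInterval

section FirstIdx

variable {u : ℕ → ℝ} {x y z : ℝ} {j k : ℕ}

theorem firstIdx_comm (u : ℕ → ℝ) (x y : ℝ) : firstIdx u x y = firstIdx u y x := by
  rw [firstIdx, firstIdx, gapInterval_comm]

theorem firstIdx_le (hj : 1 ≤ j) (h : u j ∈ gapInterval x y) : firstIdx u x y ≤ j :=
  sInf_le ⟨j, ⟨hj, h⟩, rfl⟩

theorem mem_gapInterval_of_firstIdx_eq (h : firstIdx u x y = j) :
    1 ≤ j ∧ u j ∈ gapInterval x y := by
  have hne : {j : ℕ | 1 ≤ j ∧ u j ∈ gapInterval x y}.Nonempty := by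
    by_contra hem
    rw [Set.not_nonempty_iff_eq_empty] at hem
    simp [firstIdx, hem] at h
  obtain ⟨i, hi, hij⟩ := csInf_mem (hne.image fun j : ℕ => (j : ℕ∞))
  rw [← firstIdx, h, Nat.cast_inj] at hij
  exact hij ▸ hi

theorem lt_firstIdx_iff :
    (k : ℕ∞) < firstIdx u x y ↔ ∀ j ∈ Finset.Icc 1 k, u j ∉ gapInterval x y := by
  simp only [Finset.mem_Icc, and_imp]
  constructor
  · intro h j hj hjk hmem
    exact (firstIdx_le hj hmem).trans (Nat.cast_le.mpr hjk) |>.not_gt h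
  · intro h
    by_contra hle
    obtain ⟨i, hi⟩ : ∃ i : ℕ, firstIdx u x y = i := WithTop.ne_top_iff_exists.mp
      (ne_top_of_le_ne_top (ENat.natCast_ne_top k) (not_lt.mp hle)) |>.imp fun _ => Eq.symm
    obtain ⟨hi1, hmem⟩ := mem_gapInterval_of_firstIdx_eq hi
    exact h i hi1 (by exact_mod_cast hi ▸ not_lt.mp hle) hmem

theorem min_firstIdx_le (u : ℕ → ℝ) (x y z : ℝ) :
    min (firstIdx u x y) (firstIdx u y z) ≤ firstIdx u x z := by
  refine le_sInf ?_
  rintro _ ⟨j, ⟨hj, hmem⟩, rfl⟩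
  rcases mem_gapInterval_or hmem y with h | h
  · exact min_le_of_left_le (firstIdx_le hj h)
  · exact min_le_of_right_le (firstIdx_le hj h)

theorem firstIdx_eq_of_lt (h : firstIdx u x y < firstIdx u y z) :
    firstIdx u x z = firstIdx u x y := by
  refine le_antisymm ?_ (min_eq_left h.le ▸ min_firstIdx_le u x y z)
  by_contra hlt
  have := min_firstIdx_le u x z y
  rw [firstIdx_comm u z y] at this
  exact (lt_min (not_le.mp hlt) h).not_ge this

theorem firstIdx_eq_min_of_ne (h : firstIdx u x y ≠ firstIdx u y z) :
    firstIdx u x z = min (firstIdx u x y) (firstIdx u y z) := by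
  rcases h.lt_or_gt with h | h
  · rw [min_eq_left h.le, firstIdx_eq_of_lt h]
  · rw [min_eq_right h.le, firstIdx_comm u x z, firstIdx_comm u y z, firstIdx_comm u x y] at *
    exact firstIdx_eq_of_lt h

end FirstIdx

section Prec

variable {u s : ℕ → ℝ} {x x' y z : ℝ} {j : ℕ}

theorem prec_iff_of_firstIdx_eq (h : firstIdx u x y = j) : Prec u s x y ↔ 0 < (y - x) * s j := by
  constructor
  · rintro ⟨i, hi, hpos⟩
    rwa [h, Nat.cast_inj.mp hi.symm] at *
  · exact fun hpos => ⟨j, h, hpos⟩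

theorem Prec.asymm (h : Prec u s x y) : ¬ Prec u s y x := by
  obtain ⟨j, hj, hpos⟩ := h
  rw [prec_iff_of_firstIdx_eq ((firstIdx_comm u y x).trans hj)]
  nlinarith

theorem prec_iff_of_firstIdx_lt (h : firstIdx u x y < firstIdx u x x') :
    (Prec u s x y ↔ Prec u s x' y) ∧ (Prec u s y x ↔ Prec u s y x') := by
  obtain ⟨j, hj⟩ : ∃ j : ℕ, firstIdx u x y = j := WithTop.ne_top_iff_exists.mp h.ne_top |>.imp
    fun _ => Eq.symm
  have hj' : firstIdx u x' y = j := by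
    rw [firstIdx_comm u x' y, firstIdx_eq_of_lt (firstIdx_comm u y x ▸ h), firstIdx_comm, hj]
  obtain ⟨hj1, hmem⟩ := mem_gapInterval_of_firstIdx_eq hj
  have hsep : u j ∉ gapInterval x x' := fun hm => (firstIdx_le hj1 hm).not_gt (hj ▸ h)
  have hmem' : u j ∈ gapInterval x' y := (mem_gapInterval_or hmem x').resolve_left hsep
  rw [mem_gapInterval_iff, not_not] at hsep
  have hmemy := gapInterval_comm x y ▸ hmem
  have hmemy' := gapInterval_comm x' y ▸ hmem'
  rw [prec_iff_of_firstIdx_eq hj, prec_iff_of_firstIdx_eq hj',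
    prec_iff_of_firstIdx_eq ((firstIdx_comm u y x).trans hj),
    prec_iff_of_firstIdx_eq ((firstIdx_comm u y x').trans hj')]
  refine ⟨mul_pos_iff_of_lt_iff ?_ (ne_of_mem_gapInterval hmem) (ne_of_mem_gapInterval hmem'),
    mul_pos_iff_of_lt_iff ?_ (ne_of_mem_gapInterval hmemy) (ne_of_mem_gapInterval hmemy')⟩
  · rw [lt_iff_lt_of_mem_gapInterval hmem, lt_iff_lt_of_mem_gapInterval hmem', hsep]
  · rw [lt_iff_le_of_mem_gapInterval hmemy, lt_iff_le_of_mem_gapInterval hmemy', ← not_lt,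
      ← not_lt, hsep]

theorem firstIdx_ne_of_prec_of_prec (hxy : Prec u s x y) (hyz : Prec u s y z) :
    firstIdx u x y ≠ firstIdx u y z := by
  intro heq
  obtain ⟨j, hj, h1⟩ := hxy
  have h2 := (prec_iff_of_firstIdx_eq (heq ▸ hj)).mp hyz
  obtain ⟨-, hmxy⟩ := mem_gapInterval_of_firstIdx_eq hj
  obtain ⟨-, hmyz⟩ := mem_gapInterval_of_firstIdx_eq (heq ▸ hj)
  have e1 := lt_iff_le_of_mem_gapInterval hmxy
  have e2 := lt_iff_lt_of_mem_gapInterval hmyz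
  rcases (ne_of_mem_gapInterval hmxy).lt_or_gt with hlt | hlt
  · have hzy : z < y := lt_of_le_of_ne (not_lt.mp fun h => (e2.mp h).not_ge (e1.mp hlt))
      (ne_of_mem_gapInterval hmyz).symm
    nlinarith
  · have hyz : y < z := e2.mpr (not_le.mp fun h => hlt.not_gt (e1.mpr h))
    nlinarith

theorem Prec.trans (hxy : Prec u s x y) (hyz : Prec u s y z) : Prec u s x z := by
  have hne := firstIdx_ne_of_prec_of_prec hxy hyz
  obtain ⟨j₁, hj₁, h₁⟩ := hxy
  obtain ⟨j₂, hj₂, h₂⟩ := hyz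
  rcases hne.lt_or_gt with hlt | hlt
  · have hxz := (firstIdx_eq_of_lt hlt).trans hj₁
    obtain ⟨-, hm⟩ := mem_gapInterval_of_firstIdx_eq hj₁
    obtain ⟨-, hm'⟩ := mem_gapInterval_of_firstIdx_eq hxz
    refine ⟨j₁, hxz, (mul_pos_iff_of_lt_iff ?_ (ne_of_mem_gapInterval hm)
      (ne_of_mem_gapInterval hm')).mp h₁⟩
    rw [lt_iff_lt_of_mem_gapInterval hm, lt_iff_lt_of_mem_gapInterval hm']
  · have hxz : firstIdx u x z = j₂ := by
      rw [firstIdx_comm, firstIdx_eq_of_lt (by rwa [firstIdx_comm u z y, firstIdx_comm u y x]),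
        firstIdx_comm, hj₂]
    obtain ⟨-, hm⟩ := mem_gapInterval_of_firstIdx_eq hj₂
    obtain ⟨-, hm'⟩ := mem_gapInterval_of_firstIdx_eq hxz
    refine ⟨j₂, hxz, (mul_pos_iff_of_lt_iff ?_ (ne_of_mem_gapInterval hm)
      (ne_of_mem_gapInterval hm')).mp h₂⟩
    rw [lt_iff_le_of_mem_gapInterval hm, lt_iff_le_of_mem_gapInterval hm']

theorem prec_or_prec_of_firstIdx_ne_top (hs : ∀ j, 1 ≤ j → s j ≠ 0) (h : firstIdx u x y ≠ ⊤) :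
    Prec u s x y ∨ Prec u s y x := by
  obtain ⟨j, hj⟩ : ∃ j : ℕ, firstIdx u x y = j := (WithTop.ne_top_iff_exists.mp h).imp
    fun _ => Eq.symm
  obtain ⟨hj1, hmem⟩ := mem_gapInterval_of_firstIdx_eq hj
  rw [prec_iff_of_firstIdx_eq hj, prec_iff_of_firstIdx_eq ((firstIdx_comm u y x).trans hj)]
  have hprod : (y - x) * s j ≠ 0 :=
    mul_ne_zero (sub_ne_zero.mpr (ne_of_mem_gapInterval hmem).symm) (hs j hj1)
  rcases hprod.lt_or_gt with h | h
  · exact Or.inr (by linarith [show (x - y) * s j = -((y - x) * s j) by ring])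
  · exact Or.inl h

end Prec

section Discrepancy

variable {u : ℕ → ℝ} {n : ℕ} {x y : ℝ}

noncomputable def empiricalCDF (u : ℕ → ℝ) (n : ℕ) (x : ℝ) : ℝ :=
  (1 / (n : ℝ)) * ∑ j ∈ Finset.Icc 1 n, if u j ≤ x then 1 else 0

noncomputable def discrepancy (u : ℕ → ℝ) (n : ℕ) : ℝ :=
  ⨆ x : Set.Icc (0:ℝ) 1, |(x : ℝ) - empiricalCDF u n x|

theorem empiricalCDF_mem_Icc : empiricalCDF u n x ∈ Set.Icc (0:ℝ) 1 := by
  classical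
  rw [empiricalCDF, Finset.sum_boole, one_div_mul_eq_div]
  refine ⟨by positivity, div_le_one_of_le₀ ?_ n.cast_nonneg⟩
  exact_mod_cast (Finset.card_filter_le _ _).trans (Nat.card_Icc 1 n).le

theorem abs_sub_empiricalCDF_le_discrepancy (hx : x ∈ Set.Icc (0:ℝ) 1) :
    |x - empiricalCDF u n x| ≤ discrepancy u n := by
  refine le_ciSup (f := fun x : Set.Icc (0:ℝ) 1 => |(x : ℝ) - empiricalCDF u n x|) ⟨1, ?_⟩ ⟨x, hx⟩
  rintro _ ⟨⟨z, hz⟩, rfl⟩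
  have := empiricalCDF_mem_Icc (u := u) (n := n) (x := z)
  simp only [abs_sub_le_iff]
  constructor <;> linarith [hz.1, hz.2, this.1, this.2]

theorem discrepancy_nonneg (u : ℕ → ℝ) (n : ℕ) : 0 ≤ discrepancy u n :=
  (abs_nonneg _).trans (abs_sub_empiricalCDF_le_discrepancy (u := u) (n := n) ⟨le_rfl, zero_le_one⟩)

theorem empiricalCDF_eq_of_lt_firstIdx (h : (n : ℕ∞) < firstIdx u x y) :
    empiricalCDF u n x = empiricalCDF u n y := by
  rw [lt_firstIdx_iff] at h
  rw [empiricalCDF, empiricalCDF]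
  refine congrArg _ (Finset.sum_congr rfl fun j hj => ?_)
  have := h j hj
  rw [mem_gapInterval_iff, not_not] at this
  simp only [← not_lt, this]

theorem dist_le_two_mul_discrepancy (hx : x ∈ Set.Icc (0:ℝ) 1) (hy : y ∈ Set.Icc (0:ℝ) 1)
    (h : (n : ℕ∞) < firstIdx u x y) : dist x y ≤ 2 * discrepancy u n := by
  have h1 := abs_sub_empiricalCDF_le_discrepancy (u := u) (n := n) hx
  have h2 := abs_sub_empiricalCDF_le_discrepancy (u := u) (n := n) hy
  rw [empiricalCDF_eq_of_lt_firstIdx h] at h1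
  rw [Real.dist_eq]
  calc |x - y| ≤ |x - empiricalCDF u n y| + |empiricalCDF u n y - y| := abs_sub_le _ _ _
    _ ≤ 2 * discrepancy u n := by rw [abs_sub_comm _ y]; linarith

theorem firstIdx_ne_top_of_tendsto_discrepancy (hGC : Tendsto (discrepancy u) atTop (𝓝 0))
    (hx : x ∈ Set.Icc (0:ℝ) 1) (hy : y ∈ Set.Icc (0:ℝ) 1) (hxy : x ≠ y) : firstIdx u x y ≠ ⊤ := by
  intro htop
  have hle : ∀ n, dist x y ≤ 2 * discrepancy u n := fun n =>
    dist_le_two_mul_discrepancy hx hy (htop ▸ ENat.natCast_lt_top n)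
  have hlim : Tendsto (fun n => 2 * discrepancy u n) atTop (𝓝 0) := by
    simpa using hGC.const_mul 2
  exact hxy (dist_le_zero.mp (ge_of_tendsto' hlim hle))

end Discrepancy

section Measurability

variable (u s : ℕ → ℝ)

theorem measurableSet_mem_gapInterval (t : ℝ) :
    MeasurableSet {p : ℝ × ℝ | t ∈ gapInterval p.1 p.2} := by
  have h₁ : MeasurableSet {p : ℝ × ℝ | p.1 < t} := measurableSet_lt measurable_fst measurable_const
  have h₂ : MeasurableSet {p : ℝ × ℝ | p.2 < t} := measurableSet_lt measurable_snd measurable_const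
  convert h₁.symmDiff h₂ using 1
  ext p
  simp only [Set.mem_ofPred_eq, mem_gapInterval_iff, Set.mem_symmDiff]
  tauto

theorem measurable_firstIdx : Measurable fun p : ℝ × ℝ => firstIdx u p.1 p.2 := by
  refine ENat.measurable_of_measurableSet_lt fun k => ?_
  simp only [lt_firstIdx_iff, Set.ofPred_forall]
  exact Finset.measurableSet_biInter _ fun j _ => (measurableSet_mem_gapInterval _).compl

theorem measurableSet_prec : MeasurableSet {p : ℝ × ℝ | Prec u s p.1 p.2} := by
  simp only [Prec, Set.ofPred_exists, Set.ofPred_and]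
  exact .iUnion fun j => (measurable_firstIdx u (measurableSet_singleton _)).inter
    (measurableSet_lt measurable_const (by fun_prop))

theorem measurable_phi : Measurable (phi u s) :=
  (measurable_measure_prodMk_left ((measurableSet_Icc.preimage measurable_snd).inter
    ((measurableSet_prec u s).preimage measurable_swap))).ennreal_toReal

end Measurability

section Cells

variable {u s : ℕ → ℝ} {k : ℕ} {x x' y t : ℝ}

/-- The class of `x` for the partition of `[0,1]` cut out by `u_1, …, u_k`. -/
def cell (u : ℕ → ℝ) (k : ℕ) (x : ℝ) : Set ℝ :=
  {y ∈ Set.Icc (0:ℝ) 1 | (k : ℕ∞) < firstIdx u x y}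

theorem volume_sep_Icc_ne_top (p : ℝ → Prop) : volume {y ∈ Set.Icc (0:ℝ) 1 | p y} ≠ ⊤ :=
  measure_ne_top_of_subset (Set.sep_subset _ _) measure_Icc_lt_top.ne

theorem measurableSet_cell : MeasurableSet (cell u k x) :=
  measurableSet_Icc.inter (((measurable_firstIdx u).comp measurable_prodMk_left)
    (.of_discrete (s := Set.Ioi (k : ℕ∞))))

theorem measureReal_cell_le : volume.real (cell u k x) ≤ 2 * discrepancy u k := by
  have hdiam : Metric.ediam (cell u k x) ≤ ENNReal.ofReal (2 * discrepancy u k) := by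
    refine Metric.ediam_le fun y hy w hw => ?_
    have hyw : (k : ℕ∞) < firstIdx u y w :=
      (lt_min hy.2 hw.2).trans_le (firstIdx_comm u x y ▸ min_firstIdx_le u y x w)
    rw [edist_dist]
    exact ENNReal.ofReal_le_ofReal (dist_le_two_mul_discrepancy hy.1 hw.1 hyw)
  exact ENNReal.toReal_le_of_le_ofReal (by linarith [discrepancy_nonneg u k])
    ((Real.volume_le_diam _).trans hdiam)

theorem eventually_lt_firstIdx_iff {l : Filter ℝ} :
    (∀ᶠ y in l, (k : ℕ∞) < firstIdx u x y) ↔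
      ∀ j ∈ Finset.Icc 1 k, ∀ᶠ y in l, u j ∉ gapInterval x y := by
  simp only [lt_firstIdx_iff, eventually_all_finset]

theorem eventually_not_mem_gapInterval_nhdsGT (t x : ℝ) : ∀ᶠ y in 𝓝[>] x, t ∉ gapInterval x y := by
  simp only [mem_gapInterval_iff, not_not]
  rcases lt_or_ge x t with h | h
  · filter_upwards [nhdsWithin_le_nhds (eventually_lt_nhds h)] with y hy using iff_of_true h hy
  · filter_upwards [self_mem_nhdsWithin] with y (hy : x < y)
    exact iff_of_false h.not_gt (by linarith)

theorem eventually_not_mem_gapInterval_nhds (h : t ≠ x) : ∀ᶠ y in 𝓝 x, t ∉ gapInterval x y := by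
  simp only [mem_gapInterval_iff, not_not]
  rcases h.lt_or_gt with h | h
  · filter_upwards [eventually_gt_nhds h] with y hy using iff_of_false h.not_gt hy.not_gt
  · filter_upwards [eventually_lt_nhds h] with y hy using iff_of_true h hy

theorem measureReal_cell_pos (hu : ∀ j, 1 ≤ j → u j ∈ Set.Ioo (0:ℝ) 1)
    (hx : x ∈ Set.Icc (0:ℝ) 1) : 0 < volume.real (cell u k x) := by
  obtain ⟨a, b, hab, hsub⟩ : ∃ a b, a < b ∧ Set.Ioo a b ⊆ cell u k x := by
    rcases hx.2.lt_or_eq with hx1 | rfl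
    · have hcell : cell u k x ∈ 𝓝[>] x := by
        filter_upwards [eventually_lt_firstIdx_iff.mpr fun j _ =>
          eventually_not_mem_gapInterval_nhdsGT (u j) x, Icc_mem_nhdsGT hx1] with y h₁ h₂
        exact ⟨⟨hx.1.trans h₂.1, h₂.2⟩, h₁⟩
      obtain ⟨b, hb, hsub⟩ := mem_nhdsGT_iff_exists_Ioo_subset.mp hcell
      exact ⟨x, b, hb, hsub⟩
    · have hcell : cell u k 1 ∈ 𝓝[<] 1 := by
        filter_upwards [nhdsWithin_le_nhds (eventually_lt_firstIdx_iff.mpr fun j hj =>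
          eventually_not_mem_gapInterval_nhds (hu j (Finset.mem_Icc.mp hj).1).2.ne),
          Icc_mem_nhdsLT zero_lt_one] with y h₁ h₂
        exact ⟨h₂, h₁⟩
      obtain ⟨a, ha, hsub⟩ := mem_nhdsLT_iff_exists_Ioo_subset.mp hcell
      exact ⟨a, 1, ha, hsub⟩
  exact ENNReal.toReal_pos ((Measure.measure_Ioo_pos _ |>.mpr hab).trans_le (measure_mono hsub)).ne'
    (volume_sep_Icc_ne_top _)

theorem exists_lt_firstIdx_of_mem_Icc (hx : x ∈ Set.Icc (0:ℝ) 1) :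
    ∃ c ∈ insert 0 ((Finset.Icc 1 k).image u), (k : ℕ∞) < firstIdx u x c := by
  classical
  set G := (insert 0 ((Finset.Icc 1 k).image u)).filter (· ≤ x)
  have hG : G.Nonempty := ⟨0, Finset.mem_filter.mpr ⟨Finset.mem_insert_self _ _, hx.1⟩⟩
  obtain ⟨hcF, hcx⟩ := Finset.mem_filter.mp (G.max'_mem hG)
  refine ⟨G.max' hG, hcF, lt_firstIdx_iff.mpr fun j hj hmem => ?_⟩
  rw [mem_gapInterval_iff] at hmem
  by_cases hjx : u j ≤ x
  · have := G.le_max' (u j) (Finset.mem_filter.mpr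
      ⟨Finset.mem_insert_of_mem (Finset.mem_image_of_mem u hj), hjx⟩)
    exact hmem (iff_of_false (by linarith) (by linarith))
  · exact hmem (iff_of_true (by linarith) (by linarith))

end Cells

section PrecK

variable {u s : ℕ → ℝ} {k : ℕ} {x y z : ℝ}

/-- `phiK u s k` is `lowerMeasure volume (Set.Icc 0 1) (PrecK u s k)` by `rfl`. -/
def PrecK (u s : ℕ → ℝ) (k : ℕ) (y x : ℝ) : Prop := Prec u s y x ∧ firstIdx u x y ≤ k

theorem PrecK.asymm (h : PrecK u s k x y) : ¬ PrecK u s k y x := fun h' => h.1.asymm h'.1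

theorem PrecK.neg_trans (hs : ∀ j, 1 ≤ j → s j ≠ 0) (h : PrecK u s k x y) (z : ℝ) :
    PrecK u s k x z ∨ PrecK u s k z y := by
  obtain ⟨hxy, hk⟩ := h
  by_cases hz : (k : ℕ∞) < firstIdx u x z
  · have hlt : firstIdx u x y < firstIdx u x z := (firstIdx_comm u x y ▸ hk).trans_lt hz
    refine Or.inr ⟨(prec_iff_of_firstIdx_lt hlt).1.mp hxy, ?_⟩
    rwa [firstIdx_eq_of_lt (firstIdx_comm u y x ▸ hlt)]
  rw [not_lt] at hz
  rcases prec_or_prec_of_firstIdx_ne_top hs (ne_top_of_le_ne_top (ENat.natCast_ne_top k) hz)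
    with hxz | hzx
  · exact Or.inl ⟨hxz, firstIdx_comm u z x ▸ hz⟩
  · refine Or.inr ⟨hzx.trans hxy, ?_⟩
    rw [firstIdx_comm, firstIdx_eq_min_of_ne (firstIdx_ne_of_prec_of_prec hzx hxy)]
    exact min_le_of_left_le (firstIdx_comm u z x ▸ hz)

theorem not_precK_and_not_precK_iff (hs : ∀ j, 1 ≤ j → s j ≠ 0) :
    ¬ PrecK u s k x y ∧ ¬ PrecK u s k y x ↔ (k : ℕ∞) < firstIdx u x y := by
  constructor
  · rintro ⟨h₁, h₂⟩
    by_contra hle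
    rw [not_lt] at hle
    rcases prec_or_prec_of_firstIdx_ne_top hs (ne_top_of_le_ne_top (ENat.natCast_ne_top k) hle)
      with h | h
    · exact h₁ ⟨h, firstIdx_comm u x y ▸ hle⟩
    · exact h₂ ⟨h, hle⟩
  · intro h
    exact ⟨fun h' => h'.2.not_gt (firstIdx_comm u x y ▸ h), fun h' => h'.2.not_gt h⟩

theorem setOf_incomp_precK_eq_cell (hs : ∀ j, 1 ≤ j → s j ≠ 0) (x : ℝ) :
    {y ∈ Set.Icc (0:ℝ) 1 | ¬ PrecK u s k x y ∧ ¬ PrecK u s k y x} = cell u k x :=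
  Set.ext fun _ => and_congr_right fun _ => not_precK_and_not_precK_iff hs

theorem finite_image_phiK (hs : ∀ j, 1 ≤ j → s j ≠ 0) :
    (phiK u s k '' Set.Icc (0:ℝ) 1).Finite :=
  finite_image_lowerMeasure (r := PrecK u s k) (fun _ _ _ h => h.neg_trans hs _) _ fun x hx => by
    obtain ⟨c, hc, hxc⟩ := exists_lt_firstIdx_of_mem_Icc (u := u) (k := k) hx
    exact ⟨c, hc, (not_precK_and_not_precK_iff hs).mpr hxc⟩

theorem le_measureReal_setOf_phiK_le (hu : ∀ j, 1 ≤ j → u j ∈ Set.Ioo (0:ℝ) 1)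
    (hs : ∀ j, 1 ≤ j → s j ≠ 0) {t : ℝ} (ht : t ≤ 1) :
    t ≤ volume.real {x ∈ Set.Icc (0:ℝ) 1 | phiK u s k x ≤ t} := by
  refine le_measureReal_setOf_lowerMeasure_le (r := PrecK u s k) (fun _ _ h => h.asymm)
    (fun _ _ _ h => h.neg_trans hs _) measure_Icc_lt_top.ne (fun x _ => ?_) (fun x hx => ?_)
    (finite_image_phiK hs) (by simpa)
  all_goals rw [setOf_incomp_precK_eq_cell hs]
  exacts [measurableSet_cell, measureReal_cell_pos hu hx]

theorem measureReal_setOf_phiK_le_le (hu : ∀ j, 1 ≤ j → u j ∈ Set.Ioo (0:ℝ) 1)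
    (hs : ∀ j, 1 ≤ j → s j ≠ 0) {t : ℝ} (ht : 0 ≤ t) :
    volume.real {x ∈ Set.Icc (0:ℝ) 1 | phiK u s k x ≤ t} ≤ t + 2 * discrepancy u k := by
  refine measureReal_setOf_lowerMeasure_le_le (r := PrecK u s k) (fun _ _ h => h.asymm)
    (fun _ _ _ h => h.neg_trans hs _) measure_Icc_lt_top.ne (fun x _ => ?_) (fun x hx => ?_)
    (fun x _ => ?_) (finite_image_phiK hs) (by linarith [discrepancy_nonneg u k])
  all_goals rw [setOf_incomp_precK_eq_cell hs]
  exacts [measurableSet_cell, measureReal_cell_pos hu hx, measureReal_cell_le]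

end PrecK

section Phi

variable {u s : ℕ → ℝ} {k : ℕ} {x x' : ℝ}

theorem phi_mem_Icc : phi u s x ∈ Set.Icc (0:ℝ) 1 :=
  ⟨measureReal_nonneg, (measureReal_mono (fun _ hy => hy.1) measure_Icc_lt_top.ne).trans_eq
    (by simp)⟩

theorem phiK_le_phi : phiK u s k x ≤ phi u s x :=
  measureReal_mono (fun _ hy => ⟨hy.1, hy.2.1⟩) (volume_sep_Icc_ne_top _)

theorem phi_le_phiK_add_measureReal_cell :
    phi u s x ≤ phiK u s k x + volume.real (cell u k x) := by
  refine (measureReal_mono (fun y hy => ?_)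
    (measure_union_ne_top (volume_sep_Icc_ne_top _) (volume_sep_Icc_ne_top _))).trans
    (measureReal_union_le _ _)
  by_cases hk : firstIdx u x y ≤ k
  · exact Or.inl ⟨hy.1, hy.2, hk⟩
  · exact Or.inr ⟨hy.1, not_le.mp hk⟩

theorem phi_le_phi_add_measureReal_cell {a b : ℝ}
    (h : ∀ y, firstIdx u x y ≤ k → Prec u s y a → Prec u s y b) :
    phi u s a ≤ phi u s b + volume.real (cell u k x) := by
  refine (measureReal_mono (fun y hy => ?_)
    (measure_union_ne_top (volume_sep_Icc_ne_top _) (volume_sep_Icc_ne_top _))).trans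
    (measureReal_union_le _ _)
  by_cases hk : firstIdx u x y ≤ k
  · exact Or.inl ⟨hy.1, h y hk hy.2⟩
  · exact Or.inr ⟨hy.1, not_le.mp hk⟩

theorem abs_phi_sub_phi_le (h : (k : ℕ∞) < firstIdx u x x') :
    |phi u s x' - phi u s x| ≤ volume.real (cell u k x) := by
  have hiff : ∀ y, firstIdx u x y ≤ k → (Prec u s y x ↔ Prec u s y x') :=
    fun y hy => (prec_iff_of_firstIdx_lt (hy.trans_lt h)).2
  exact abs_sub_le_iff.mpr
    ⟨by linarith [phi_le_phi_add_measureReal_cell (x := x) fun y hy => (hiff y hy).mpr],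
      by linarith [phi_le_phi_add_measureReal_cell (x := x) fun y hy => (hiff y hy).mp]⟩

theorem tendstoUniformlyOn_phiK (hGC : Tendsto (discrepancy u) atTop (𝓝 0)) :
    TendstoUniformlyOn (fun k => phiK u s k) (phi u s) atTop (Set.Icc (0:ℝ) 1) := by
  refine (Metric.tendstoUniformly_iff.mpr fun ε hε => ?_).tendstoUniformlyOn
  filter_upwards [(hGC.const_mul 2).eventually (gt_mem_nhds (by simpa using hε))] with k hk x
  rw [Real.dist_eq, abs_of_nonneg (sub_nonneg.mpr phiK_le_phi)]
  linarith [phi_le_phiK_add_measureReal_cell (u := u) (s := s) (k := k) (x := x),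
    measureReal_cell_le (u := u) (k := k) (x := x)]

theorem continuousAt_phi (hGC : Tendsto (discrepancy u) atTop (𝓝 0))
    (hx : ∀ j, 1 ≤ j → u j ≠ x) : ContinuousAt (phi u s) x := by
  refine Metric.continuousAt_iff'.mpr fun ε hε => ?_
  obtain ⟨k, hk⟩ := ((hGC.const_mul 2).eventually (gt_mem_nhds (by simpa using hε))).exists
  filter_upwards [eventually_lt_firstIdx_iff.mpr fun j hj =>
    eventually_not_mem_gapInterval_nhds (hx j (Finset.mem_Icc.mp hj).1)] with x' hx'
  rw [Real.dist_eq]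
  linarith [abs_phi_sub_phi_le (s := s) hx', measureReal_cell_le (u := u) (k := k) (x := x)]

theorem volume_setOf_phi_le (hu : ∀ j, 1 ≤ j → u j ∈ Set.Ioo (0:ℝ) 1)
    (hs : ∀ j, 1 ≤ j → s j ≠ 0) (hGC : Tendsto (discrepancy u) atTop (𝓝 0)) {t : ℝ}
    (ht : t ∈ Set.Icc (0:ℝ) 1) :
    volume {x ∈ Set.Icc (0:ℝ) 1 | phi u s x ≤ t} = ENNReal.ofReal t := by
  set V := volume.real {x ∈ Set.Icc (0:ℝ) 1 | phi u s x ≤ t}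
  have hupper : ∀ k, V ≤ t + 2 * discrepancy u k := fun k => calc
    V ≤ volume.real {x ∈ Set.Icc (0:ℝ) 1 | phiK u s k x ≤ t} :=
      measureReal_mono (fun x hx => ⟨hx.1, phiK_le_phi.trans hx.2⟩) (volume_sep_Icc_ne_top _)
    _ ≤ t + 2 * discrepancy u k := measureReal_setOf_phiK_le_le hu hs ht.1
  have hlower : ∀ k, t - 2 * discrepancy u k ≤ V := fun k => calc
    t - 2 * discrepancy u k
      ≤ volume.real {x ∈ Set.Icc (0:ℝ) 1 | phiK u s k x ≤ t - 2 * discrepancy u k} :=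
        le_measureReal_setOf_phiK_le hu hs (by linarith [ht.2, discrepancy_nonneg u k])
    _ ≤ V := by
      refine measureReal_mono (fun x hx => ⟨hx.1, ?_⟩) (volume_sep_Icc_ne_top _)
      linarith [hx.2, phi_le_phiK_add_measureReal_cell (u := u) (s := s) (k := k) (x := x),
        measureReal_cell_le (u := u) (k := k) (x := x)]
  have hV : V = t := le_antisymm
    (ge_of_tendsto' (by simpa using (hGC.const_mul 2).const_add t) hupper)
    (le_of_tendsto' (by simpa using (hGC.const_mul 2).const_sub t) hlower)
  rw [← ofReal_measureReal (volume_sep_Icc_ne_top _)]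
  exact congrArg ENNReal.ofReal hV

end Phi

theorem prec_total_phi_uniform_continuous_measurePreserving_general
    (u s : ℕ → ℝ)
    (hu : ∀ j, 1 ≤ j → u j ∈ Set.Ioo (0:ℝ) 1)
    (hs : ∀ j, 1 ≤ j → s j = 1 ∨ s j = -1)
    (hGC : Tendsto (fun n : ℕ => ⨆ x : Set.Icc (0:ℝ) 1,
        |(x : ℝ) - (1 / (n : ℝ)) * ∑ j ∈ Finset.Icc 1 n,
          (if u j ≤ (x : ℝ) then (1:ℝ) else 0)|) atTop (nhds 0)) :
    (∀ x ∈ Set.Icc (0:ℝ) 1, ∀ y ∈ Set.Icc (0:ℝ) 1, x ≠ y →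
      Prec u s x y ∨ Prec u s y x) ∧
    TendstoUniformlyOn (fun k => phiK u s k) (phi u s) atTop (Set.Icc (0:ℝ) 1) ∧
    (∀ x ∈ Set.Icc (0:ℝ) 1, (∀ j, 1 ≤ j → u j ≠ x) →
      ContinuousWithinAt (phi u s) (Set.Icc (0:ℝ) 1) x) ∧
    (Measure.map (phi u s) (volume.restrict (Set.Icc (0:ℝ) 1)) =
      volume.restrict (Set.Icc (0:ℝ) 1)) ∧
    (Measure.map Prod.fst
        (Measure.map (fun x => (x, phi u s x)) (volume.restrict (Set.Icc (0:ℝ) 1))) =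
      volume.restrict (Set.Icc (0:ℝ) 1)) ∧
    (Measure.map Prod.snd
        (Measure.map (fun x => (x, phi u s x)) (volume.restrict (Set.Icc (0:ℝ) 1))) =
      volume.restrict (Set.Icc (0:ℝ) 1)) := by
  have hs₀ : ∀ j, 1 ≤ j → s j ≠ 0 := fun j hj => by rcases hs j hj with h | h <;> norm_num [h]
  have hmap : Measure.map (phi u s) (volume.restrict (Set.Icc (0:ℝ) 1)) =
      volume.restrict (Set.Icc (0:ℝ) 1) :=
    map_restrict_Icc_eq_of_volume_setOf_le (measurable_phi u s)
      (fun _ _ => phi_mem_Icc)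
      fun _ ht => volume_setOf_phi_le hu hs₀ hGC ht
  have hgraph : Measurable fun x => (x, phi u s x) := measurable_id.prodMk (measurable_phi u s)
  refine ⟨fun x hx y hy hxy => prec_or_prec_of_firstIdx_ne_top hs₀
      (firstIdx_ne_top_of_tendsto_discrepancy hGC hx hy hxy),
    tendstoUniformlyOn_phiK hGC, fun x _ hx => (continuousAt_phi hGC hx).continuousWithinAt,
    hmap, ?_, ?_⟩
  · rw [Measure.map_map measurable_fst hgraph]
    exact Measure.map_id
  · rwa [Measure.map_map measurable_snd hgraph]

/-- assume the `u_j` pairwise distinct with Glivenko–Cantelli-type uniform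
convergence of the empirical distribution functions. Then: (i) any two distinct points of
`[0,1]` are `≺`-comparable; (ii) `φ_k → φ` uniformly on `[0,1]`; (iii) `φ` is continuous at
every point of `[0,1] ∖ {u_j}`; (iv) `φ` preserves Lebesgue measure on `[0,1]`, and hence the
pushforward of Leb under `x ↦ (x, φ(x))` is a permuton (both marginals are Leb). -/
theorem prec_total_phi_uniform_continuous_measurePreserving
    (u s : ℕ → ℝ)
    (hu : ∀ j, 1 ≤ j → u j ∈ Set.Ioo (0:ℝ) 1)
    (hs : ∀ j, 1 ≤ j → s j = 1 ∨ s j = -1)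
    (hdist : ∀ j k, 1 ≤ j → 1 ≤ k → u j = u k → j = k)
    (hGC : Tendsto (fun n : ℕ => ⨆ x : Set.Icc (0:ℝ) 1,
        |(x : ℝ) - (1 / (n : ℝ)) * ∑ j ∈ Finset.Icc 1 n,
          (if u j ≤ (x : ℝ) then (1:ℝ) else 0)|) atTop (nhds 0)) :
    (∀ x ∈ Set.Icc (0:ℝ) 1, ∀ y ∈ Set.Icc (0:ℝ) 1, x ≠ y →
      Prec u s x y ∨ Prec u s y x) ∧
    TendstoUniformlyOn (fun k => phiK u s k) (phi u s) atTop (Set.Icc (0:ℝ) 1) ∧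
    (∀ x ∈ Set.Icc (0:ℝ) 1, (∀ j, 1 ≤ j → u j ≠ x) →
      ContinuousWithinAt (phi u s) (Set.Icc (0:ℝ) 1) x) ∧
    (Measure.map (phi u s) (volume.restrict (Set.Icc (0:ℝ) 1)) =
      volume.restrict (Set.Icc (0:ℝ) 1)) ∧
    (Measure.map Prod.fst
        (Measure.map (fun x => (x, phi u s x)) (volume.restrict (Set.Icc (0:ℝ) 1))) =
      volume.restrict (Set.Icc (0:ℝ) 1)) ∧
    (Measure.map Prod.snd
        (Measure.map (fun x => (x, phi u s x)) (volume.restrict (Set.Icc (0:ℝ) 1))) =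
      volume.restrict (Set.Icc (0:ℝ) 1)) :=
  prec_total_phi_uniform_continuous_measurePreserving_general u s hu hs hGC
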